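/- Let X be a GO space, D an ultrafilter on a set I, (x_i)_{i∈I} a sequence in X, and let A = {x ∈ X : {i ∈ I : x < x_i} ∈ D} and B = {x ∈ X : {i ∈ I : x_i < x} ∈ D}. Then (x_i)_{i∈I} D-converges to some point x ∈ X if and only if the pair (A,B) is neither a gap nor a pseudo-gap of X. -/

import Mathlib

universe u v

open Set Cardinal Filter Topology TopologicalSpace

section Defs

variable {X : Type u} [LinearOrder X]

/-- A subset `Y` of a linear order `X`, having no maximum, is `lam`-full in `X` on the right
if for every `y ∈ Y` the set `⋃ y' ∈ Y, (y, y')` (intervals computed in `X`)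
has cardinality at least `lam`. -/
def FullRight (lam : Cardinal.{u}) (Y : Set X) : Prop :=
  (¬ ∃ m ∈ Y, ∀ y ∈ Y, y ≤ m) ∧
    ∀ y ∈ Y, lam ≤ #(⋃ y' ∈ Y, Ioo y y')

/-- A subset `Y` of a linear order `X`, having no minimum, is `lam`-full in `X` on the left
if for every `y ∈ Y` the set `⋃ y' ∈ Y, (y', y)` (intervals computed in `X`)
has cardinality at least `lam`. -/
def FullLeft (lam : Cardinal.{u}) (Y : Set X) : Prop :=
  (¬ ∃ m ∈ Y, ∀ y ∈ Y, m ≤ y) ∧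
    ∀ y ∈ Y, lam ≤ #(⋃ y' ∈ Y, Ioo y' y)

/-- The pair `(A, B)` is a gap of the space `X`: `A`, `B` are open, `A ∪ B = X`,
every element of `A` is less than every element of `B`, `A` has no maximum and `B` has
no minimum (`A` or `B` may be empty). -/
def IsGap [TopologicalSpace X] (A B : Set X) : Prop :=
  IsOpen A ∧ IsOpen B ∧ A ∪ B = Set.univ ∧ (∀ a ∈ A, ∀ b ∈ B, a < b) ∧
    (¬ ∃ m ∈ A, ∀ a ∈ A, a ≤ m) ∧ (¬ ∃ m ∈ B, ∀ b ∈ B, m ≤ b)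

/-- The pair `(A, B)` is a pseudo-gap of the space `X`: `A`, `B` are open and nonempty,
`A ∪ B = X`, every element of `A` is less than every element of `B`, and either `A` has a
maximum and `B` has no minimum, or `A` has no maximum and `B` has a minimum. -/
def IsPseudoGap [TopologicalSpace X] (A B : Set X) : Prop :=
  IsOpen A ∧ IsOpen B ∧ A ∪ B = Set.univ ∧ (∀ a ∈ A, ∀ b ∈ B, a < b) ∧
    A.Nonempty ∧ B.Nonempty ∧
    (((∃ m ∈ A, ∀ a ∈ A, a ≤ m) ∧ ¬ ∃ m ∈ B, ∀ b ∈ B, m ≤ b) ∨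
      ((¬ ∃ m ∈ A, ∀ a ∈ A, a ≤ m) ∧ ∃ m ∈ B, ∀ b ∈ B, m ≤ b))

/-- The cofinality of `A`: the least cardinality of a subset of `A` cofinal in `A`. -/
noncomputable def cofinCard (A : Set X) : Cardinal.{u} :=
  sInf {c | ∃ S : Set X, S ⊆ A ∧ (∀ a ∈ A, ∃ s ∈ S, a ≤ s) ∧ c = #S}

/-- The coinitiality of `B`: the least cardinality of a subset of `B` coinitial in `B`. -/
noncomputable def coinitCard (B : Set X) : Cardinal.{u} :=
  sInf {c | ∃ S : Set X, S ⊆ B ∧ (∀ b ∈ B, ∃ s ∈ S, s ≤ b) ∧ c = #S}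

/-- `mu` is a type of the gap `(A, B)`: `mu` is the cofinality of `A` or the coinitiality
of `B`. -/
def IsGapType (mu : Cardinal.{u}) (A B : Set X) : Prop :=
  mu = cofinCard A ∨ mu = coinitCard B

/-- `mu` is the type of the pseudo-gap `(A, B)`: the cofinality of `A` if `B` has a minimum,
the coinitiality of `B` if `A` has a maximum. -/
def IsPseudoGapType (mu : Cardinal.{u}) (A B : Set X) : Prop :=
  ((∃ m ∈ B, ∀ b ∈ B, m ≤ b) ∧ mu = cofinCard A) ∨
    ((∃ m ∈ A, ∀ a ∈ A, a ≤ m) ∧ mu = coinitCard B)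

end Defs

/-- A topological space is `[ν, ν]`-compact if every open cover of cardinality at most `ν`
has a subcover of cardinality less than `ν`. -/
def NuNuCompact (X : Type u) [TopologicalSpace X] (ν : Cardinal.{u}) : Prop :=
  ∀ 𝒰 : Set (Set X), (∀ U ∈ 𝒰, IsOpen U) → ⋃₀ 𝒰 = Set.univ → #𝒰 ≤ ν →
    ∃ 𝒱 ⊆ 𝒰, #𝒱 < ν ∧ ⋃₀ 𝒱 = Set.univ

/-- A topological space is weakly `[ν, ν]`-compact if every open cover of cardinality at
most `ν` has a subfamily of cardinality less than `ν` whose union is dense. -/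
def WeakNuNuCompact (X : Type u) [TopologicalSpace X] (ν : Cardinal.{u}) : Prop :=
  ∀ 𝒰 : Set (Set X), (∀ U ∈ 𝒰, IsOpen U) → ⋃₀ 𝒰 = Set.univ → #𝒰 ≤ ν →
    ∃ 𝒱 ⊆ 𝒰, #𝒱 < ν ∧ Dense (⋃₀ 𝒱)

/-- A topological space is initially `lam`-compact if every open cover of cardinality at
most `lam` has a finite subcover. -/
def InitiallyCompact (X : Type u) [TopologicalSpace X] (lam : Cardinal.{u}) : Prop :=
  ∀ 𝒰 : Set (Set X), (∀ U ∈ 𝒰, IsOpen U) → ⋃₀ 𝒰 = Set.univ → #𝒰 ≤ lam →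
    ∃ 𝒱 ⊆ 𝒰, 𝒱.Finite ∧ ⋃₀ 𝒱 = Set.univ

/-- A topological space is weakly initially `lam`-compact if every open cover of cardinality
at most `lam` has a finite subfamily whose union is dense. -/
def WeakInitiallyCompact (X : Type u) [TopologicalSpace X] (lam : Cardinal.{u}) : Prop :=
  ∀ 𝒰 : Set (Set X), (∀ U ∈ 𝒰, IsOpen U) → ⋃₀ 𝒰 = Set.univ → #𝒰 ≤ lam →
    ∃ 𝒱 ⊆ 𝒰, 𝒱.Finite ∧ Dense (⋃₀ 𝒱)

/-- The sequence `x` `D`-converges to `p`: for every open neighbourhood `U` of `p`,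
`{i | x i ∈ U} ∈ D`. -/
def DConv {I : Type v} {X : Type u} [TopologicalSpace X] (D : Ultrafilter I)
    (x : I → X) (p : X) : Prop :=
  ∀ U : Set X, IsOpen U → p ∈ U → {i | x i ∈ U} ∈ D

/-- `X` is `D`-compact: every `I`-indexed sequence of elements of `X` `D`-converges to some
point of `X`. -/
def DCompact {I : Type v} (D : Ultrafilter I) (X : Type u) [TopologicalSpace X] : Prop :=
  ∀ x : I → X, ∃ p : X, DConv D x p

/-- `p` is a `D`-limit point of the sequence of sets `Y`: for every neighbourhood `U`
of `p`, `{i | U ∩ Y i ≠ ∅} ∈ D`. -/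
def DLimitPt {I : Type v} {X : Type u} [TopologicalSpace X] (D : Ultrafilter I)
    (Y : I → Set X) (p : X) : Prop :=
  ∀ U ∈ nhds p, {i | (U ∩ Y i).Nonempty} ∈ D

/-- `X` is `D`-pseudocompact: every `I`-indexed sequence of nonempty open sets of `X` has a
`D`-limit point. -/
def DPseudocompact {I : Type v} (D : Ultrafilter I) (X : Type u) [TopologicalSpace X] : Prop :=
  ∀ O : I → Set X, (∀ i, IsOpen (O i)) → (∀ i, (O i).Nonempty) → ∃ p : X, DLimitPt D O p

/-- The ultrafilter `D` is `ν`-decomposable: there is `f : I → ν` such that the preimage of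
every subset of `ν` of cardinality less than `ν` is not in `D`. -/
def Decomposable {I : Type v} (D : Ultrafilter I) (ν : Cardinal.{u}) : Prop :=
  ∃ f : I → ν.ord.ToType, ∀ S : Set ν.ord.ToType, #S < ν → f ⁻¹' S ∉ D

/-!
Write `A`, `B` for the points eventually below, resp. above, `x` along `D`. A point outside
`A ∪ B` is one at which `x` is `D`-eventually constant, so it is a `D`-limit; otherwise
`A ∪ B = X`, and everything hinges on whether `A` and `B` are both open. If `A` is not open at
some `p ∈ A`, every order-convex neighbourhood of `p` contains a point `b ∈ B`, hence all `x i`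
with `p < x i < b`, so `x` `D`-converges to `p`. Conversely, if `x` `D`-converges to `p ∈ A`,
an order-convex neighbourhood of `p` avoiding a point `q > p` would have to contain some `x i > q`,
so `p` bounds `A` from above; if `A` were open it would contain some `x i > p`. Finally, when
`A ∪ B = X` and both are open, `(A, B)` is a gap or a pseudo-gap: if `a` is the maximum of `A`,
almost all `x i` exceed `a` and so lie in `B`, hence `B` is nonempty and has no minimum (almost
all `x i` would lie below it); symmetrically for a minimum of `B`.
-/

/-- For an ultrafilter `D`, `lowerCut D x` and `upperCut D x` are the sets `A` and `B` of the
theorem: the points below, resp. above, the element `[x]` of the ultrapower. -/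
def lowerCut {ι : Type v} {X : Type u} [LinearOrder X] (l : Filter ι) (x : ι → X) : Set X :=
  {p | ∀ᶠ i in l, p < x i}

def upperCut {ι : Type v} {X : Type u} [LinearOrder X] (l : Filter ι) (x : ι → X) : Set X :=
  {p | ∀ᶠ i in l, x i < p}

section Cuts

variable {ι : Type v} {X : Type u} [LinearOrder X] {l : Filter ι} {x : ι → X} {p : X}

theorem lt_of_mem_lowerCut_of_mem_upperCut [l.NeBot] {a b : X} (ha : a ∈ lowerCut l x)
    (hb : b ∈ upperCut l x) : a < b :=
  let ⟨_, hai, hib⟩ := (ha.and hb).exists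
  hai.trans hib

theorem eventually_eq_of_notMem_lowerCut_union_upperCut {D : Ultrafilter ι}
    (hp : p ∉ lowerCut D x ∪ upperCut D x) : ∀ᶠ i in D, x i = p := by
  have htri : ∀ᶠ i in D, p < x i ∨ p = x i ∨ x i < p :=
    Eventually.of_forall fun i => lt_trichotomy p (x i)
  simp only [Ultrafilter.eventually_or] at htri
  rcases htri with h | h | h
  exacts [absurd (Or.inl h) hp, h.mono fun _ => Eq.symm, absurd (Or.inr h) hp]

theorem eventually_mem_upperCut_of_isGreatest
    (hun : lowerCut l x ∪ upperCut l x = Set.univ) (hp : IsGreatest (lowerCut l x) p) :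
    ∀ᶠ i in l, x i ∈ upperCut l x := by
  filter_upwards [hp.1] with i hi
  exact ((hun ▸ mem_univ (x i)).resolve_left fun h => (hp.2 h).not_gt hi)

theorem eventually_mem_lowerCut_of_isLeast
    (hun : lowerCut l x ∪ upperCut l x = Set.univ) (hp : IsLeast (upperCut l x) p) :
    ∀ᶠ i in l, x i ∈ lowerCut l x :=
  eventually_mem_upperCut_of_isGreatest (X := Xᵒᵈ) (x := OrderDual.toDual ∘ x)
    ((union_comm _ _).trans hun) hp

end Cuts

section Gaps

variable {X : Type u} [LinearOrder X] [TopologicalSpace X] {A B : Set X}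

theorem isGap_or_isPseudoGap_of_isOpen (hA : IsOpen A) (hB : IsOpen B)
    (hun : A ∪ B = Set.univ) (hlt : ∀ a ∈ A, ∀ b ∈ B, a < b)
    (hmaxmin : ¬ ((∃ m ∈ A, ∀ a ∈ A, a ≤ m) ∧ ∃ m ∈ B, ∀ b ∈ B, m ≤ b))
    (hmax : (∃ m ∈ A, ∀ a ∈ A, a ≤ m) → B.Nonempty)
    (hmin : (∃ m ∈ B, ∀ b ∈ B, m ≤ b) → A.Nonempty) :
    IsGap A B ∨ IsPseudoGap A B := by
  by_cases hAmax : ∃ m ∈ A, ∀ a ∈ A, a ≤ m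
  · have ⟨m, hm, _⟩ := hAmax
    exact Or.inr ⟨hA, hB, hun, hlt, ⟨m, hm⟩, hmax hAmax, Or.inl ⟨hAmax, (hmaxmin ⟨hAmax, ·⟩)⟩⟩
  · by_cases hBmin : ∃ m ∈ B, ∀ b ∈ B, m ≤ b
    · have ⟨m, hm, _⟩ := hBmin
      exact Or.inr ⟨hA, hB, hun, hlt, hmin hBmin, ⟨m, hm⟩, Or.inr ⟨hAmax, hBmin⟩⟩
    · exact Or.inl ⟨hA, hB, hun, hlt, hAmax, hBmin⟩

variable {ι : Type v} {l : Filter ι} [l.NeBot] {x : ι → X}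

theorem isGap_or_isPseudoGap_lowerCut_upperCut_iff :
    IsGap (lowerCut l x) (upperCut l x) ∨ IsPseudoGap (lowerCut l x) (upperCut l x) ↔
      lowerCut l x ∪ upperCut l x = Set.univ ∧ IsOpen (lowerCut l x) ∧ IsOpen (upperCut l x) := by
  refine ⟨?_, fun ⟨hun, hA, hB⟩ => isGap_or_isPseudoGap_of_isOpen hA hB hun
    (fun _ ha _ hb => lt_of_mem_lowerCut_of_mem_upperCut ha hb) ?_ ?_ ?_⟩
  · rintro (⟨hA, hB, hun, -⟩ | ⟨hA, hB, hun, -⟩) <;> exact ⟨hun, hA, hB⟩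
  · rintro ⟨⟨a, ha⟩, ⟨b, hb⟩⟩
    obtain ⟨i, hiB, hiA⟩ := ((eventually_mem_upperCut_of_isGreatest hun ha).and
      (eventually_mem_lowerCut_of_isLeast hun hb)).exists
    exact (lt_of_mem_lowerCut_of_mem_upperCut hiA hiB).false
  · rintro ⟨m, hm⟩
    obtain ⟨i, hi⟩ := (eventually_mem_upperCut_of_isGreatest hun hm).exists
    exact ⟨x i, hi⟩
  · rintro ⟨m, hm⟩
    obtain ⟨i, hi⟩ := (eventually_mem_lowerCut_of_isLeast hun hm).exists
    exact ⟨x i, hi⟩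

end Gaps

/-- A GO space is a Hausdorff space with this property. -/
def HasOrdConnectedBasis (X : Type u) [LinearOrder X] [TopologicalSpace X] : Prop :=
  ∃ 𝓑 : Set (Set X), IsTopologicalBasis 𝓑 ∧ ∀ s ∈ 𝓑, s.OrdConnected

namespace HasOrdConnectedBasis

variable {X : Type u} [LinearOrder X] [TopologicalSpace X]

theorem nhds_hasBasis (hX : HasOrdConnectedBasis X) (p : X) :
    (𝓝 p).HasBasis (fun W => W ∈ 𝓝 p ∧ W.OrdConnected) id := by
  obtain ⟨𝓑, h𝓑, hconn⟩ := hX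
  refine ⟨fun t => ⟨fun ht => ?_, fun ⟨W, ⟨hW, _⟩, hWt⟩ => mem_of_superset hW hWt⟩⟩
  obtain ⟨W, hW𝓑, hpW, hWt⟩ := h𝓑.mem_nhds_iff.mp ht
  exact ⟨W, ⟨h𝓑.mem_nhds hW𝓑 hpW, hconn W hW𝓑⟩, hWt⟩

theorem dual (hX : HasOrdConnectedBasis X) : HasOrdConnectedBasis Xᵒᵈ :=
  let ⟨𝓑, h𝓑, hconn⟩ := hX
  ⟨𝓑, h𝓑, fun s hs => (hconn s hs).dual⟩

end HasOrdConnectedBasis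

section Convergence

variable {ι : Type v} {X : Type u} [LinearOrder X] [TopologicalSpace X] {l : Filter ι}
  {x : ι → X} {p q : X}

theorem le_of_tendsto_of_mem_lowerCut (hX : HasOrdConnectedBasis X) [T1Space X] [l.NeBot]
    (hx : Tendsto x l (𝓝 p)) (hq : q ∈ lowerCut l x) : q ≤ p := by
  by_contra! hpq
  obtain ⟨W, ⟨hW, hconn⟩, hWq⟩ :=
    (hX.nhds_hasBasis p).mem_iff.mp (isOpen_compl_singleton.mem_nhds hpq.ne)
  obtain ⟨i, hiW, hqi⟩ := ((hx.eventually_mem hW).and hq).exists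
  exact hWq (hconn.out (mem_of_mem_nhds hW) hiW ⟨hpq.le, hqi.le⟩) rfl

theorem le_of_tendsto_of_mem_upperCut (hX : HasOrdConnectedBasis X) [T1Space X] [l.NeBot]
    (hx : Tendsto x l (𝓝 p)) (hq : q ∈ upperCut l x) : p ≤ q :=
  have : T1Space Xᵒᵈ := ‹T1Space X›
  le_of_tendsto_of_mem_lowerCut (X := Xᵒᵈ) (x := OrderDual.toDual ∘ x) hX.dual hx hq

theorem tendsto_of_mem_lowerCut_of_mem_closure (hX : HasOrdConnectedBasis X)
    (hp : p ∈ lowerCut l x) (hcl : p ∈ closure (upperCut l x)) : Tendsto x l (𝓝 p) := by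
  refine (hX.nhds_hasBasis p).tendsto_right_iff.mpr fun W ⟨hW, hconn⟩ => ?_
  obtain ⟨b, hbW, hb⟩ := mem_closure_iff_nhds.mp hcl W hW
  filter_upwards [hp, hb] with i hpi hib
  exact hconn.out (mem_of_mem_nhds hW) hbW ⟨hpi.le, hib.le⟩

theorem tendsto_of_mem_upperCut_of_mem_closure (hX : HasOrdConnectedBasis X)
    (hp : p ∈ upperCut l x) (hcl : p ∈ closure (lowerCut l x)) : Tendsto x l (𝓝 p) :=
  tendsto_of_mem_lowerCut_of_mem_closure (X := Xᵒᵈ) (x := OrderDual.toDual ∘ x) hX.dual hp hcl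

end Convergence

theorem exists_tendsto_iff_not_isOpen_cuts {ι : Type v} {X : Type u} [LinearOrder X]
    [TopologicalSpace X] [T1Space X] (hX : HasOrdConnectedBasis X) (D : Ultrafilter ι)
    (x : ι → X) :
    (∃ p, Tendsto x D (𝓝 p)) ↔ ¬ (lowerCut D x ∪ upperCut D x = Set.univ ∧
      IsOpen (lowerCut D x) ∧ IsOpen (upperCut D x)) := by
  constructor
  · rintro ⟨p, hx⟩ ⟨hun, hA, hB⟩
    rcases eq_univ_iff_forall.mp hun p with hp | hp
    · obtain ⟨i, hiA, hpi⟩ := ((hx.eventually_mem (hA.mem_nhds hp)).and hp).exists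
      exact (le_of_tendsto_of_mem_lowerCut hX hx hiA).not_gt hpi
    · obtain ⟨i, hiB, hip⟩ := ((hx.eventually_mem (hB.mem_nhds hp)).and hp).exists
      exact (le_of_tendsto_of_mem_upperCut hX hx hiB).not_gt hip
  · intro h
    by_cases hun : lowerCut D x ∪ upperCut D x = Set.univ
    · rcases not_and_or.mp (h ∘ And.intro hun) with hA | hB
      · obtain ⟨p, hp, hpi⟩ := not_subset.mp (mt subset_interior_iff_isOpen.mp hA)
        have hcl : p ∈ closure (lowerCut D x)ᶜ := by rwa [closure_compl]
        exact ⟨p, tendsto_of_mem_lowerCut_of_mem_closure hX hp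
          (closure_mono (compl_subset_iff_union.mpr hun) hcl)⟩
      · obtain ⟨p, hp, hpi⟩ := not_subset.mp (mt subset_interior_iff_isOpen.mp hB)
        have hcl : p ∈ closure (upperCut D x)ᶜ := by rwa [closure_compl]
        exact ⟨p, tendsto_of_mem_upperCut_of_mem_closure hX hp
          (closure_mono (compl_subset_iff_union.mpr ((union_comm _ _).trans hun)) hcl)⟩
    · obtain ⟨p, hp⟩ := (ne_univ_iff_exists_notMem _).mp hun
      exact ⟨p, tendsto_const_nhds.congr'
        ((eventually_eq_of_notMem_lowerCut_union_upperCut hp).mono fun _ => Eq.symm)⟩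

theorem dConv_iff_tendsto {I : Type v} {X : Type u} [TopologicalSpace X] {D : Ultrafilter I}
    {x : I → X} {p : X} : DConv D x p ↔ Tendsto x D (𝓝 p) := by
  rw [(nhds_basis_opens p).tendsto_right_iff]
  exact ⟨fun h U hU => h U hU.2 hU.1, fun h U hU hpU => h U ⟨hpU, hU⟩⟩

/-- In a GO space, the sequence `x` `D`-converges to some point iff the pair `(A, B)` is
neither a gap nor a pseudo-gap. -/
theorem stmt5 {X : Type u} [LinearOrder X] [TopologicalSpace X] [T2Space X]
    (hGO : ∃ 𝓑 : Set (Set X), IsTopologicalBasis 𝓑 ∧ ∀ s ∈ 𝓑, s.OrdConnected)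
    {I : Type v} (D : Ultrafilter I) (x : I → X) (A B : Set X)
    (hA : A = {p : X | {i | p < x i} ∈ D}) (hB : B = {p : X | {i | x i < p} ∈ D}) :
    (∃ p : X, DConv D x p) ↔ ¬ (IsGap A B ∨ IsPseudoGap A B) := by
  obtain rfl : A = lowerCut D x := hA
  obtain rfl : B = upperCut D x := hB
  rw [isGap_or_isPseudoGap_lowerCut_upperCut_iff, ← exists_tendsto_iff_not_isOpen_cuts hGO]
  exact exists_congr fun _ => dConv_iff_tendsto
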